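/- Let n ≥ 1, let x = (x_1, …, x_n) ∈ ℝ^n with x_1 ≥ x_2 ≥ … ≥ x_n ≥ 0, Σ_{i=1}^n x_i² = 1 and (if n ≥ 2) x_1 + x_2 ≤ 1, and let ε_1, …, ε_n be independent random variables with Pr(ε_i = 1) = Pr(ε_i = −1) = 1/2. Then Pr(|Σ_{i=1}^n ε_i x_i| ≤ 1) ≥ 9/25 = 0.36. -/

import Mathlib

open Classical Finset

/-- The sign `±1` associated to a Boolean: this encodes a Rademacher variable. -/
noncomputable def sgn (b : Bool) : ℝ := if b then 1 else -1

/-- Probability of an event under the uniform measure on the `2^n` sign vectors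
`ε ∈ {-1,1}^n`, encoded as Boolean vectors `σ : Fin n → Bool`. -/
noncomputable def prSign (n : ℕ) (P : (Fin n → Bool) → Prop) : ℝ :=
  ((Finset.univ.filter P).card : ℝ) / 2 ^ n

/-!
Write `S = ∑ εᵢ xᵢ`, so that `𝔼 S² = ∑ xᵢ²` (coordinates are indexed from `0`: `x 0 ≥ x 1` are
the two largest weights). Chebyshev bounds `P(|S| ≥ z)`; by the symmetry `S ↦ -S` the one-sided tail
is half of that and `P(S ≥ 0) ≥ 1/2`, whence `P(|t + S| ≤ μ) ≥ 1/2 - 𝔼 S² / (2 (μ + |t|)²)`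
whenever `|t| ≤ μ`.

* If `x 0 ≥ 9/16`: whenever `|∑_{i ≥ 1} εᵢ xᵢ| ≤ 1 + x 0` one of the two signs `ε₀` works, and
  Chebyshev gives probability `≥ x 0 / (1 + x 0) ≥ 9/25`.
* If `x 1 ≤ 1/3`: reveal the signs one at a time and stop as soon as the partial sum `t` could
  leave `[-1, 1]` at some later step, i.e. `|t| + e > 1` for a remaining weight `e ≤ 1/3`. The
  invariant `∑ (remaining xⱼ²) + |t| e ≤ 1` then makes the shifted bound at least `9/25`.
* Otherwise condition on `ε₀, ε₁`: the shift `±(x 0 + x 1)` is handled by the shifted bound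
  directly, the shift `±(x 0 - x 1)` by the same stopping argument with threshold `1 - x 1`, and
  what remains is a polynomial inequality in `x 0, x 1`.
-/

@[simp] lemma sgn_true : sgn true = 1 := by simp [sgn]

@[simp] lemma sgn_false : sgn false = -1 := by simp [sgn]

noncomputable def signSum {m : ℕ} (y : Fin m → ℝ) (σ : Fin m → Bool) : ℝ :=
  ∑ i, sgn (σ i) * y i

@[simp] lemma signSum_fin_zero (y : Fin 0 → ℝ) (σ : Fin 0 → Bool) : signSum y σ = 0 := by
  simp [signSum]

lemma signSum_cons {m : ℕ} (y : Fin (m + 1) → ℝ) (b : Bool) (ρ : Fin m → Bool) :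
    signSum y (Fin.cons b ρ) = sgn b * y 0 + signSum (Fin.tail y) ρ := by
  simp [signSum, Fin.sum_univ_succ, Fin.tail]

lemma signSum_not {m : ℕ} (y : Fin m → ℝ) (σ : Fin m → Bool) :
    signSum y (fun i => !σ i) = -signSum y σ := by
  rw [signSum, signSum, ← sum_neg_distrib]
  congr! 1 with i
  cases σ i <;> simp

lemma sum_sq_fin_tail {m : ℕ} (y : Fin (m + 1) → ℝ) :
    ∑ i, Fin.tail y i ^ 2 = ∑ i, y i ^ 2 - y 0 ^ 2 := by
  rw [Fin.sum_univ_succ]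
  simp [Fin.tail]

lemma Antitone.fin_tail {α : Type*} [Preorder α] {m : ℕ} {x : Fin (m + 1) → α}
    (hx : Antitone x) : Antitone (Fin.tail x) :=
  hx.comp_monotone Fin.strictMono_succ.monotone

lemma Antitone.fin_tail_le {α : Type*} [Preorder α] {m : ℕ} {x : Fin (m + 2) → α}
    (hx : Antitone x) (i : Fin (m + 1)) : Fin.tail x i ≤ x 1 :=
  hx (by rw [Fin.le_def, Fin.val_one, Fin.val_succ]; omega)

lemma sum_pi_bool_succ {M : Type*} [AddCommMonoid M] {m : ℕ} (f : (Fin (m + 1) → Bool) → M) :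
    ∑ σ, f σ = ∑ ρ, (f (Fin.cons true ρ) + f (Fin.cons false ρ)) := by
  rw [← (Fin.consEquiv fun _ => Bool).sum_comp, Fintype.sum_prod_type, Fintype.sum_bool,
    sum_add_distrib]
  rfl

lemma prSign_eq_sum (m : ℕ) (P : (Fin m → Bool) → Prop) :
    prSign m P = (∑ σ, if P σ then 1 else 0) / 2 ^ m := by
  rw [prSign, sum_boole]

section prSign

variable {m : ℕ} {P Q R : (Fin m → Bool) → Prop}

lemma prSign_mono (h : ∀ σ, P σ → Q σ) : prSign m P ≤ prSign m Q := by
  simp only [prSign_eq_sum]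
  gcongr with σ
  split_ifs <;> simp_all

lemma prSign_le_add (h : ∀ σ, P σ → Q σ ∨ R σ) : prSign m P ≤ prSign m Q + prSign m R := by
  simp only [prSign_eq_sum, ← add_div, ← sum_add_distrib]
  gcongr with σ
  have := h σ
  split_ifs <;> simp_all

lemma prSign_or (h : ∀ σ, P σ → ¬Q σ) :
    prSign m (fun σ => P σ ∨ Q σ) = prSign m P + prSign m Q := by
  simp only [prSign_eq_sum, ← add_div, ← sum_add_distrib]
  congr! 2 with σ
  split_ifs <;> simp_all

lemma prSign_of_forall (h : ∀ σ, P σ) : prSign m P = 1 := by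
  simp [prSign_eq_sum, h]

lemma prSign_succ (P : (Fin (m + 1) → Bool) → Prop) :
    prSign (m + 1) P =
      (prSign m (fun ρ => P (Fin.cons true ρ)) + prSign m (fun ρ => P (Fin.cons false ρ))) / 2 := by
  simp only [prSign_eq_sum, sum_pi_bool_succ (fun σ => if P σ then (1 : ℝ) else 0),
    sum_add_distrib]
  ring

end prSign

section signSum

variable {m : ℕ} (y : Fin m → ℝ)

lemma prSign_neg_signSum (Q : ℝ → Prop) :
    prSign m (fun σ => Q (-signSum y σ)) = prSign m (fun σ => Q (signSum y σ)) := by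
  let flip : Equiv.Perm (Fin m → Bool) :=
    Function.Involutive.toPerm (fun σ i => !σ i) fun σ => by simp
  simp only [prSign_eq_sum, ← signSum_not]
  congr 1
  exact Equiv.sum_comp flip fun σ => if Q (signSum y σ) then 1 else 0

lemma sum_signSum_sq : ∑ σ, signSum y σ ^ 2 = 2 ^ m * ∑ i, y i ^ 2 := by
  induction m with
  | zero => simp
  | succ m ih =>
    have hpair : ∀ ρ, signSum y (Fin.cons true ρ) ^ 2 + signSum y (Fin.cons false ρ) ^ 2
        = 2 * y 0 ^ 2 + 2 * signSum (Fin.tail y) ρ ^ 2 := fun ρ => by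
      simp only [signSum_cons, sgn_true, sgn_false]
      ring
    rw [sum_pi_bool_succ, sum_congr rfl fun ρ _ => hpair ρ, sum_add_distrib, ← mul_sum,
      ← mul_sum, ih, sum_sq_fin_tail, sum_const, card_univ, Fintype.card_fun, Fintype.card_bool,
      Fintype.card_fin]
    simp only [nsmul_eq_mul]
    push_cast
    ring

theorem prSign_abs_signSum_ge_le {z : ℝ} (hz : 0 < z) :
    prSign m (fun σ => z ≤ |signSum y σ|) ≤ (∑ i, y i ^ 2) / z ^ 2 := by
  rw [prSign_eq_sum, div_le_div_iff₀ (by positivity) (by positivity), mul_comm _ (2 ^ m),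
    ← sum_signSum_sq, sum_mul]
  gcongr with σ
  split_ifs with h
  · rw [one_mul, ← sq_abs (signSum y σ)]
    exact pow_le_pow_left₀ hz.le h 2
  · rw [zero_mul]
    positivity

lemma one_half_le_prSign_signSum_nonneg : 1 / 2 ≤ prSign m (fun σ => 0 ≤ signSum y σ) := by
  have hcover :
      1 ≤ prSign m (fun σ => 0 ≤ signSum y σ) + prSign m (fun σ => 0 ≤ -signSum y σ) := by
    rw [← prSign_of_forall (m := m) (P := fun _ => True) fun _ => trivial]
    exact prSign_le_add fun σ _ => (le_total 0 (signSum y σ)).imp id neg_nonneg.2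
  rw [prSign_neg_signSum y (0 ≤ ·)] at hcover
  linarith

theorem prSign_signSum_ge_le {z : ℝ} (hz : 0 < z) :
    prSign m (fun σ => z ≤ signSum y σ) ≤ (∑ i, y i ^ 2) / (2 * z ^ 2) := by
  have hsplit := prSign_or (m := m) (P := fun σ => z ≤ signSum y σ)
    (Q := fun σ => z ≤ -signSum y σ) fun σ h h' => by linarith
  rw [prSign_neg_signSum y (z ≤ ·)] at hsplit
  have hcheb := (prSign_mono (Q := fun σ => z ≤ |signSum y σ|) fun σ => le_abs.2).trans
    (prSign_abs_signSum_ge_le y hz)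
  rw [hsplit] at hcheb
  rw [mul_comm, ← div_div]
  linarith

end signSum

theorem one_half_sub_le_prSign_abs_add_signSum_le {m : ℕ} (y : Fin m → ℝ) {t μ : ℝ}
    (hμ : 0 < μ) (ht : |t| ≤ μ) :
    1 / 2 - (∑ i, y i ^ 2) / (2 * (μ + |t|) ^ 2) ≤
      prSign m (fun σ => |t + signSum y σ| ≤ μ) := by
  wlog htneg : t ≤ 0 generalizing t
  · have hsymm : prSign m (fun σ => |-t + signSum y σ| ≤ μ)
        = prSign m (fun σ => |t + signSum y σ| ≤ μ) := by
      rw [← prSign_neg_signSum y (fun r => |t + r| ≤ μ)]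
      congr! 3 with σ
      rw [← abs_neg, neg_add, neg_neg]
    simpa [hsymm] using this (t := -t) (by rwa [abs_neg]) (by linarith)
  have hcover : prSign m (fun σ => 0 ≤ signSum y σ) ≤
      prSign m (fun σ => |t + signSum y σ| ≤ μ) + prSign m (fun σ => μ + |t| ≤ signSum y σ) :=
    prSign_le_add fun σ hσ => by
      rw [abs_of_nonpos htneg] at ht ⊢
      rw [abs_le]
      by_cases h : μ + -t ≤ signSum y σ
      · exact Or.inr h
      · exact Or.inl ⟨by linarith, by linarith⟩
  linarith [one_half_le_prSign_signSum_nonneg y,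
    prSign_signSum_ge_le y (z := μ + |t|) (by positivity)]

lemma prSign_abs_add_signSum_le_succ {m : ℕ} (y : Fin (m + 1) → ℝ) (t μ : ℝ) :
    prSign (m + 1) (fun σ => |t + signSum y σ| ≤ μ) =
      (prSign m (fun ρ => |t + y 0 + signSum (Fin.tail y) ρ| ≤ μ) +
        prSign m (fun ρ => |t - y 0 + signSum (Fin.tail y) ρ| ≤ μ)) / 2 := by
  simp only [prSign_succ, signSum_cons, sgn_true, sgn_false, one_mul, neg_one_mul, ← add_assoc,
    ← sub_eq_add_neg]

/-- Optional stopping: `I m y t` says the walk at position `t` with remaining weights `y` has not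
stopped; `step` lets it either go on or stop at a position where the bound `p` already holds. -/
theorem le_prSign_abs_add_signSum_le_of_stopping {p μ : ℝ} (hp : p ≤ 1)
    (I : ∀ m, (Fin m → ℝ) → ℝ → Prop) (base : ∀ y t, I 0 y t → |t| ≤ μ)
    (step : ∀ m (y : Fin (m + 1) → ℝ) t t', I (m + 1) y t → |t' - t| ≤ |y 0| →
      I m (Fin.tail y) t' ∨ p ≤ prSign m (fun σ => |t' + signSum (Fin.tail y) σ| ≤ μ))
    (m : ℕ) (y : Fin m → ℝ) (t : ℝ) (hI : I m y t) :
    p ≤ prSign m (fun σ => |t + signSum y σ| ≤ μ) := by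
  induction m generalizing t with
  | zero => simpa [prSign_of_forall, base y t hI] using hp
  | succ m ih =>
    have hbranch : ∀ t', |t' - t| ≤ |y 0| →
        p ≤ prSign m (fun σ => |t' + signSum (Fin.tail y) σ| ≤ μ) := fun t' ht' =>
      (step m y t t' hI ht').elim (ih _ _) id
    rw [prSign_abs_add_signSum_le_succ]
    linarith [hbranch (t + y 0) (by simp), hbranch (t - y 0) (by simp)]

lemma abs_le_abs_add_of_abs_sub_le {t t' a : ℝ} (ha : 0 ≤ a) (h : |t' - t| ≤ |a|) :
    |t'| ≤ |t| + a := by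
  rw [abs_of_nonneg ha] at h
  linarith [abs_sub_abs_le_abs_sub t' t]

theorem one_half_sub_le_prSign_abs_add_signSum_le_of_bounded_steps {μ c W : ℝ} (hμ : 0 < μ)
    (hc : 0 ≤ c) {m : ℕ} (y : Fin m → ℝ) (t : ℝ) (hy : ∀ i, 0 ≤ y i ∧ y i ≤ c)
    (hW : ∑ i, y i ^ 2 ≤ W) (ht : |t| ≤ μ - c) :
    1 / 2 - W / (2 * (2 * μ - c) ^ 2) ≤ prSign m (fun σ => |t + signSum y σ| ≤ μ) := by
  have hW0 : 0 ≤ W := (sum_nonneg fun i _ => sq_nonneg (y i)).trans hW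
  have hcμ : c < 2 * μ := by linarith [abs_nonneg t]
  refine le_prSign_abs_add_signSum_le_of_stopping
    (by linarith [show 0 ≤ W / (2 * (2 * μ - c) ^ 2) by positivity])
    (fun m y t => (∀ i, 0 ≤ y i ∧ y i ≤ c) ∧ ∑ i, y i ^ 2 ≤ W ∧ |t| ≤ μ - c)
    (fun y t h => by linarith [h.2.2]) ?_ m y t ⟨hy, hW, ht⟩
  rintro m y t t' ⟨hy, hW, ht⟩ ht'
  have habs := abs_le_abs_add_of_abs_sub_le (hy 0).1 ht'
  have htail : ∑ i, Fin.tail y i ^ 2 ≤ W := by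
    rw [sum_sq_fin_tail]
    linarith [sq_nonneg (y 0)]
  by_cases hcont : |t'| ≤ μ - c
  · exact Or.inl ⟨fun i => hy i.succ, htail, hcont⟩
  refine Or.inr (le_trans ?_
    (one_half_sub_le_prSign_abs_add_signSum_le _ hμ (by linarith [(hy 0).2])))
  gcongr
  linarith

theorem nine_div_twentyFive_le_prSign_abs_add_signSum_le_of_antitone {m : ℕ} (y : Fin m → ℝ)
    (t : ℝ) (hanti : Antitone y) (hy : ∀ i, 0 ≤ y i ∧ y i ≤ 1 / 3) (ht : |t| ≤ 1)
    (hty : ∀ i, |t| + y i ≤ 1) (hV : ∀ i, ∑ j, y j ^ 2 + |t| * y i ≤ 1) :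
    9 / 25 ≤ prSign m (fun σ => |t + signSum y σ| ≤ 1) := by
  refine le_prSign_abs_add_signSum_le_of_stopping (by norm_num)
    (fun m y t => Antitone y ∧ (∀ i, 0 ≤ y i ∧ y i ≤ 1 / 3) ∧ |t| ≤ 1 ∧
      (∀ i, |t| + y i ≤ 1) ∧ ∀ i, ∑ j, y j ^ 2 + |t| * y i ≤ 1)
    (fun y t h => h.2.2.1) ?_ m y t ⟨hanti, hy, ht, hty, hV⟩
  rintro m y t t' ⟨hanti, hy, -, hty, hV⟩ ht'
  have habs := abs_le_abs_add_of_abs_sub_le (hy 0).1 ht'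
  have hV' : ∀ i, ∑ j, Fin.tail y j ^ 2 + |t'| * Fin.tail y i ≤ 1 := fun i => by
    have hle : y i.succ ≤ y 0 := hanti (Fin.zero_le _)
    show ∑ j, Fin.tail y j ^ 2 + |t'| * y i.succ ≤ 1
    rw [sum_sq_fin_tail]
    nlinarith [hV i.succ, mul_le_mul_of_nonneg_right habs (hy i.succ).1,
      mul_le_mul_of_nonneg_left hle (hy 0).1]
  by_cases hcont : ∀ i, |t'| + Fin.tail y i ≤ 1
  · exact Or.inl ⟨hanti.fin_tail, fun i => hy i.succ, by linarith [hty 0], hcont, hV'⟩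
  push Not at hcont
  obtain ⟨i, hi⟩ := hcont
  set e := Fin.tail y i
  obtain ⟨he0, he⟩ : 0 ≤ e ∧ e ≤ 1 / 3 := hy i.succ
  have hsum : ∑ j, Fin.tail y j ^ 2 ≤ 1 - (1 - e) * e := by
    nlinarith [hV' i, mul_le_mul_of_nonneg_right (by linarith : 1 - e ≤ |t'|) he0]
  refine Or.inr (le_trans ?_
    (one_half_sub_le_prSign_abs_add_signSum_le _ one_pos (by linarith [hty 0])))
  have hbound : (1 - (1 - e) * e) / (2 * (2 - e) ^ 2) ≤ 7 / 50 := by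
    rw [div_le_iff₀ (by nlinarith)]
    nlinarith [mul_nonneg (by linarith : (0:ℝ) ≤ 1 - 3 * e) (by linarith : (0:ℝ) ≤ 1 + 2 * e)]
  have hmono : (∑ j, Fin.tail y j ^ 2) / (2 * (1 + |t'|) ^ 2)
      ≤ (1 - (1 - e) * e) / (2 * (2 - e) ^ 2) :=
    div_le_div₀ (by nlinarith) hsum (by nlinarith) (by gcongr <;> linarith)
  linarith

lemma prSign_abs_signSum_le_succ {m : ℕ} (y : Fin (m + 1) → ℝ) (μ : ℝ) :
    prSign (m + 1) (fun σ => |signSum y σ| ≤ μ) =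
      (prSign m (fun ρ => |y 0 + signSum (Fin.tail y) ρ| ≤ μ) +
        prSign m (fun ρ => |-y 0 + signSum (Fin.tail y) ρ| ≤ μ)) / 2 := by
  simpa using prSign_abs_add_signSum_le_succ y 0 μ

theorem div_one_add_le_prSign_abs_signSum_le {m : ℕ} (y : Fin (m + 1) → ℝ) (hy0 : 0 ≤ y 0)
    (hy : ∑ i, y i ^ 2 ≤ 1) :
    y 0 / (1 + y 0) ≤ prSign (m + 1) (fun σ => |signSum y σ| ≤ 1) := by
  have ha1 : y 0 ≤ 1 := by
    nlinarith [single_le_sum (fun i _ => sq_nonneg (y i)) (mem_univ (0 : Fin (m + 1)))]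
  rw [prSign_abs_signSum_le_succ]
  set a := y 0
  set S := signSum (Fin.tail y)
  have hcover : prSign m (fun ρ => |S ρ| ≤ 1 + a) ≤
      prSign m (fun ρ => |a + S ρ| ≤ 1) + prSign m (fun ρ => |-a + S ρ| ≤ 1) :=
    prSign_le_add fun ρ h => by
      rw [abs_le] at h ⊢
      rw [abs_le]
      rcases le_total 0 (S ρ) with hS | hS
      · exact Or.inr ⟨by linarith, by linarith⟩
      · exact Or.inl ⟨by linarith, by linarith⟩
  have htotal : 1 ≤ prSign m (fun ρ => |S ρ| ≤ 1 + a) + prSign m (fun ρ => 1 + a ≤ |S ρ|) := by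
    rw [← prSign_of_forall (m := m) (P := fun _ => True) fun _ => trivial]
    exact prSign_le_add fun ρ _ => le_total _ _
  have hcheb : prSign m (fun ρ => 1 + a ≤ |S ρ|) ≤ (1 - a ^ 2) / (1 + a) ^ 2 := by
    refine (prSign_abs_signSum_ge_le _ (by positivity)).trans ?_
    rw [sum_sq_fin_tail]
    gcongr
  have hfrac : (1 - a ^ 2) / (1 + a) ^ 2 = 1 - 2 * (a / (1 + a)) := by
    field_simp
    ring
  linarith

theorem nine_div_twentyFive_le_prSign_of_le_one_third {m : ℕ} (x : Fin (m + 2) → ℝ)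
    (hanti : Antitone x) (hnonneg : ∀ i, 0 ≤ x i) (hx : ∑ i, x i ^ 2 = 1) (h01 : x 0 + x 1 ≤ 1)
    (h1 : x 1 ≤ 1 / 3) :
    9 / 25 ≤ prSign (m + 2) (fun σ => |signSum x σ| ≤ 1) := by
  have hx0 : x 0 ≤ 1 := by
    nlinarith [single_le_sum (fun i _ => sq_nonneg (x i)) (mem_univ (0 : Fin (m + 2)))]
  have hbranch : ∀ t, |t| = x 0 →
      9 / 25 ≤ prSign (m + 1) (fun σ => |t + signSum (Fin.tail x) σ| ≤ 1) := fun t ht => by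
    refine nine_div_twentyFive_le_prSign_abs_add_signSum_le_of_antitone _ t hanti.fin_tail
      (fun i => ⟨hnonneg _, (hanti.fin_tail_le i).trans h1⟩) (ht ▸ hx0)
      (fun i => by linarith [hanti.fin_tail_le i]) fun i => ?_
    rw [sum_sq_fin_tail, hx, ht]
    have hle : Fin.tail x i ≤ x 0 := (hanti.fin_tail_le i).trans (hanti (Fin.zero_le 1))
    nlinarith [mul_le_mul_of_nonneg_left hle (hnonneg 0)]
  have hx0abs : |x 0| = x 0 := abs_of_nonneg (hnonneg 0)
  rw [prSign_abs_signSum_le_succ]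
  linarith [hbranch (x 0) hx0abs, hbranch (-x 0) (by rwa [abs_neg])]

lemma one_sub_sq_sub_sq_div_add_div_le {a b : ℝ} (hb : 1 / 3 ≤ b) (hba : b ≤ a) (ha : a ≤ 9 / 16)
    (hab : a + b ≤ 1) :
    (1 - a ^ 2 - b ^ 2) / (2 * (1 + (a + b)) ^ 2) + (1 - a ^ 2 - b ^ 2) / (2 * (2 - b) ^ 2)
      ≤ 7 / 25 := by
  have hd : 0 < 2 * (2 - b) ^ 2 := mul_pos two_pos (pow_pos (by linarith) 2)
  have hs : 0 < 2 * (1 + (a + b)) ^ 2 := mul_pos two_pos (pow_pos (by linarith) 2)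
  rw [div_add_div _ _ hs.ne' hd.ne', div_le_iff₀ (mul_pos hs hd)]
  nlinarith [sq_nonneg (a - b), sq_nonneg (b - 1 / 3), sq_nonneg (a - 1 / 3),
    sq_nonneg (a + b - 2 / 3), sq_nonneg (1 - a - b),
    mul_nonneg (sub_nonneg.2 hba) (by linarith : (0:ℝ) ≤ b - 1 / 3),
    mul_nonneg (by linarith : (0:ℝ) ≤ a - 1 / 3) (by linarith : (0:ℝ) ≤ b - 1 / 3),
    mul_nonneg (by linarith : (0:ℝ) ≤ 1 - a - b) (by linarith : (0:ℝ) ≤ b - 1 / 3),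
    mul_nonneg (by linarith : (0:ℝ) ≤ 1 - a - b) (by linarith : (0:ℝ) ≤ a - 1 / 3),
    mul_nonneg (by linarith : (0:ℝ) ≤ 9 / 16 - a) (by linarith : (0:ℝ) ≤ b - 1 / 3),
    mul_nonneg (mul_nonneg (by linarith : (0:ℝ) ≤ a - 1 / 3) (by linarith : (0:ℝ) ≤ b - 1 / 3))
      (by linarith : (0:ℝ) ≤ 1 - a - b)]

theorem nine_div_twentyFive_le_prSign_of_one_third_lt {m : ℕ} (x : Fin (m + 2) → ℝ)
    (hanti : Antitone x) (hnonneg : ∀ i, 0 ≤ x i) (hx : ∑ i, x i ^ 2 = 1) (h01 : x 0 + x 1 ≤ 1)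
    (h0 : x 0 ≤ 9 / 16) (h1 : 1 / 3 < x 1) :
    9 / 25 ≤ prSign (m + 2) (fun σ => |signSum x σ| ≤ 1) := by
  have hx10 : x 1 ≤ x 0 := hanti (Fin.zero_le 1)
  have htail0 : Fin.tail x 0 = x 1 := congrArg x Fin.succ_zero_eq_one
  set z := Fin.tail (Fin.tail x)
  have hV : ∑ i, z i ^ 2 = 1 - x 0 ^ 2 - x 1 ^ 2 := by
    rw [sum_sq_fin_tail, sum_sq_fin_tail, hx, htail0]
  have hsum : ∀ t, |t| = x 0 + x 1 →
      1 / 2 - (1 - x 0 ^ 2 - x 1 ^ 2) / (2 * (1 + (x 0 + x 1)) ^ 2) ≤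
        prSign m (fun σ => |t + signSum z σ| ≤ 1) := fun t ht => by
    have := one_half_sub_le_prSign_abs_add_signSum_le z one_pos (by rw [ht]; exact h01)
    rwa [hV, ht] at this
  have hdiff : ∀ t, |t| = x 0 - x 1 →
      1 / 2 - (1 - x 0 ^ 2 - x 1 ^ 2) / (2 * (2 - x 1) ^ 2) ≤
        prSign m (fun σ => |t + signSum z σ| ≤ 1) := fun t ht => by
    have := one_half_sub_le_prSign_abs_add_signSum_le_of_bounded_steps one_pos (hnonneg 1) z t
      (fun i => ⟨hnonneg _, hanti.fin_tail_le _⟩) hV.le (by linarith [hnonneg 1])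
    rwa [mul_one] at this
  rw [prSign_abs_signSum_le_succ, prSign_abs_add_signSum_le_succ, prSign_abs_add_signSum_le_succ,
    htail0]
  linarith [hsum (x 0 + x 1) (abs_of_nonneg (by linarith [hnonneg 1])),
    hsum (-x 0 - x 1) (by rw [abs_of_nonpos (by linarith [hnonneg 1])]; ring),
    hdiff (x 0 - x 1) (abs_of_nonneg (by linarith)),
    hdiff (-x 0 + x 1) (by rw [abs_of_nonpos (by linarith)]; ring),
    one_sub_sq_sub_sq_div_add_div_le h1.le hx10 h0 h01]

theorem stmt19 (n : ℕ) (x : Fin n → ℝ)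
    (hmono : ∀ i j : Fin n, i ≤ j → x j ≤ x i)
    (hnonneg : ∀ i, 0 ≤ x i)
    (hx : ∑ i, (x i) ^ 2 = 1)
    (h12 : ∀ h2 : 2 ≤ n, x ⟨0, by omega⟩ + x ⟨1, by omega⟩ ≤ 1) :
    prSign n (fun σ => |∑ i, sgn (σ i) * x i| ≤ 1) ≥ 9 / 25 := by
  have hanti : Antitone x := fun i j => hmono i j
  obtain _ | m := n
  · simp at hx
  rcases le_or_gt (9 / 16) (x 0) with hbig | hsmall
  · calc (9 / 25 : ℝ) ≤ x 0 / (1 + x 0) := by rw [le_div_iff₀ (by positivity)]; linarith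
      _ ≤ _ := div_one_add_le_prSign_abs_signSum_le x (hnonneg 0) hx.le
  obtain _ | m := m
  · have : x 0 ^ 2 = 1 := by simpa using hx
    nlinarith [hnonneg 0]
  have h01 : x 0 + x 1 ≤ 1 := h12 (by omega)
  rcases le_or_gt (x 1) (1 / 3) with hsnd | hsnd
  · exact nine_div_twentyFive_le_prSign_of_le_one_third x hanti hnonneg hx h01 hsnd
  · exact nine_div_twentyFive_le_prSign_of_one_third_lt x hanti hnonneg hx h01 hsmall.le hsnd
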